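/- Let F be the formal power series over ℚ whose coefficient of q^n is (n+1)·σ₁(n+1), i.e., F = Σ_{k≥1} k·σ₁(k)·q^{k−1}. Then for every natural number g ≥ 1, the Bryan–Leung count N_{g,6} := g · (coefficient of q^6 in F^{g−1}) satisfies N_{g,6} = (4/5)·g(g−1)(81g⁵ − 810g⁴ + 4095g³ − 11835g² + 18409g − 11800). -/

import Mathlib

/-! The coefficient of `q^k` in `F^(m+1) = F^m · F` only involves the coefficients of
`q^0, …, q^k` in `F^m` and the first few values `k σ₁(k)`. A simultaneous induction on `m`
therefore shows that the first seven coefficients of `F^m` are explicit polynomials in `m`. -/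

noncomputable def FBL : PowerSeries ℚ :=
  PowerSeries.mk fun n => (((n + 1) * ArithmeticFunction.sigma 1 (n + 1) : ℕ) : ℚ)

open PowerSeries

lemma coeff_FBL (n : ℕ) :
    coeff n FBL = (((n + 1) * ArithmeticFunction.sigma 1 (n + 1) : ℕ) : ℚ) :=
  coeff_mk _ _

lemma sigma_one_one_to_seven :
    ArithmeticFunction.sigma 1 1 = 1 ∧ ArithmeticFunction.sigma 1 2 = 3 ∧
    ArithmeticFunction.sigma 1 3 = 4 ∧ ArithmeticFunction.sigma 1 4 = 7 ∧
    ArithmeticFunction.sigma 1 5 = 6 ∧ ArithmeticFunction.sigma 1 6 = 12 ∧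
    ArithmeticFunction.sigma 1 7 = 8 := by
  decide

lemma coeff_FBL_pow_of_le_six (m : ℕ) :
    coeff 0 (FBL ^ m) = 1 ∧
    coeff 1 (FBL ^ m) = 6 * m ∧
    coeff 2 (FBL ^ m) = -6 * m + 18 * m ^ 2 ∧
    coeff 3 (FBL ^ m) = 28 * m - 36 * m ^ 2 + 36 * m ^ 3 ∧
    coeff 4 (FBL ^ m) = -102 * m + 186 * m ^ 2 - 108 * m ^ 3 + 54 * m ^ 4 ∧
    coeff 5 (FBL ^ m) =
      (1956 / 5) * m - 780 * m ^ 2 + 612 * m ^ 3 - 216 * m ^ 4 + (324 / 5) * m ^ 5 ∧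
    coeff 6 (FBL ^ m) = -1488 * m + (16756 / 5) * m ^ 2 - 2880 * m ^ 3 + 1332 * m ^ 4
      - 324 * m ^ 5 + (324 / 5) * m ^ 6 := by
  induction m with
  | zero => simp [coeff_one]
  | succ m ih =>
    obtain ⟨h0, h1, h2, h3, h4, h5, h6⟩ := ih
    obtain ⟨s1, s2, s3, s4, s5, s6, s7⟩ := sigma_one_one_to_seven
    refine ⟨?_, ?_, ?_, ?_, ?_, ?_, ?_⟩ <;>
      simp [pow_succ, coeff_mul, Finset.Nat.sum_antidiagonal_eq_sum_range_succ_mk,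
        Finset.sum_range_succ, coeff_FBL, h0, h1, h2, h3, h4, h5, h6,
        s1, s2, s3, s4, s5, s6, s7] <;>
      ring

theorem N_g_6_general (g : ℕ) :
    (g : ℚ) * (PowerSeries.coeff (R := ℚ) 6) (FBL ^ (g - 1)) =
      (4 / 5 : ℚ) * (g : ℚ) * ((g : ℚ) - 1) * (81 * (g : ℚ) ^ 5 - 810 * (g : ℚ) ^ 4 + 4095 * (g : ℚ) ^ 3 - 11835 * (g : ℚ) ^ 2 + 18409 * (g : ℚ) - 11800) := by
  cases g with
  | zero => simp
  | succ m =>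
    rw [Nat.add_sub_cancel, (coeff_FBL_pow_of_le_six m).2.2.2.2.2.2]
    push_cast
    ring

/-- The Bryan–Leung count `N_{g,6} := g · (coefficient of q^6 in F^{g−1})`
is given by the node polynomial of Table (5.1). -/
theorem N_g_6 (g : ℕ) (hg : 1 ≤ g) :
    (g : ℚ) * (PowerSeries.coeff (R := ℚ) 6) (FBL ^ (g - 1)) =
      (4 / 5 : ℚ) * (g : ℚ) * ((g : ℚ) - 1) * (81 * (g : ℚ) ^ 5 - 810 * (g : ℚ) ^ 4 + 4095 * (g : ℚ) ^ 3 - 11835 * (g : ℚ) ^ 2 + 18409 * (g : ℚ) - 11800) :=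
  N_g_6_general g
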